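/- Let η ≥ 1 be real, 0 < V₂ < V₁, and W₁, W₂ real. Then (V₁^{η−2} W₁² − V₂^{η−2} W₂²)/(V₁^{η} − V₂^{η}) + η (V₂ W₁ − V₁ W₂)² (V₁V₂)^{η−2}/(V₁^{η} − V₂^{η})² ≥ ((V₁^{η−1} W₁ − V₂^{η−1} W₂)/(V₁^{η} − V₂^{η}))². -/
import Mathlib


theorem stmt_7 (η V₁ V₂ W₁ W₂ : ℝ) (hη : 1 ≤ η) (hV2 : 0 < V₂) (hV21 : V₂ < V₁) :
    ((V₁ ^ (η - 1) * W₁ - V₂ ^ (η - 1) * W₂) / (V₁ ^ η - V₂ ^ η)) ^ 2 ≤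
      (V₁ ^ (η - 2) * W₁ ^ 2 - V₂ ^ (η - 2) * W₂ ^ 2) / (V₁ ^ η - V₂ ^ η) +
        η * (V₂ * W₁ - V₁ * W₂) ^ 2 * (V₁ * V₂) ^ (η - 2) / (V₁ ^ η - V₂ ^ η) ^ 2 := by
  have hV1 : (0:ℝ) < V₁ := hV2.trans hV21
  have hab : V₂ ^ η < V₁ ^ η := Real.rpow_lt_rpow hV2.le hV21 (by linarith)
  have hb : (0:ℝ) < V₂ ^ η := Real.rpow_pos_of_pos hV2 η
  have ha : (0:ℝ) < V₁ ^ η := Real.rpow_pos_of_pos hV1 η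
  have hD : (0:ℝ) < V₁ ^ η - V₂ ^ η := sub_pos.2 hab
  have e1 : V₁ ^ (η - 1) = V₁ ^ η / V₁ := by
    rw [Real.rpow_sub hV1, Real.rpow_one]
  have e2 : V₂ ^ (η - 1) = V₂ ^ η / V₂ := by
    rw [Real.rpow_sub hV2, Real.rpow_one]
  have e3 : V₁ ^ (η - 2) = V₁ ^ η / V₁ ^ 2 := by
    rw [Real.rpow_sub hV1, Real.rpow_two, sq]
  have e4 : V₂ ^ (η - 2) = V₂ ^ η / V₂ ^ 2 := by
    rw [Real.rpow_sub hV2, Real.rpow_two, sq]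
  have e5 : (V₁ * V₂) ^ (η - 2) = V₁ ^ η * V₂ ^ η / (V₁ * V₂) ^ 2 := by
    rw [Real.rpow_sub (mul_pos hV1 hV2), Real.rpow_two, sq,
      Real.mul_rpow hV1.le hV2.le]
  rw [e1, e2, e3, e4, e5]
  generalize V₁ ^ η = a at ha hD
  generalize V₂ ^ η = b at hb hD
  have key : (a / V₁ ^ 2 * W₁ ^ 2 - b / V₂ ^ 2 * W₂ ^ 2) / (a - b) +
        η * (V₂ * W₁ - V₁ * W₂) ^ 2 * (a * b / (V₁ * V₂) ^ 2) / (a - b) ^ 2 -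
        ((a / V₁ * W₁ - b / V₂ * W₂) / (a - b)) ^ 2 =
      (η - 1) * a * b * (V₂ * W₁ - V₁ * W₂) ^ 2 / ((V₁ * V₂) ^ 2 * (a - b) ^ 2) := by
    field_simp
    ring
  have hnn : (0:ℝ) ≤ (η - 1) * a * b * (V₂ * W₁ - V₁ * W₂) ^ 2 /
      ((V₁ * V₂) ^ 2 * (a - b) ^ 2) :=
    div_nonneg (mul_nonneg (mul_nonneg (mul_nonneg (sub_nonneg.2 hη) ha.le) hb.le)
      (sq_nonneg _)) (by positivity)
  linarith
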